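/- Let q ≥ 1 and a, b integers. Write a = a₀a′ and b = b₀b′ with a₀b₀ dividing some power of q and gcd(a′b′, q) = 1. Then the Kloosterman sum satisfies S(a, b; q) = (1/φ(q)) ∑_{ψ mod q} τ(ψ, a₀) τ(ψ, b₀) ψ̄(a′b′), the sum over all Dirichlet characters ψ mod q. -/

import Mathlib

/-- e(x) = exp(2πix). -/
noncomputable def eC (x : ℂ) : ℂ := Complex.exp (2 * Real.pi * Complex.I * x)

/-- The Kloosterman sum S(a, b; q) = ∑_{d mod q, (d,q)=1} e((ad + b d̄)/q). -/
noncomputable def kloosterman (q : ℕ) [NeZero q] (a b : ℤ) : ℂ :=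
  ∑ d : (ZMod q)ˣ,
    eC ((((a : ZMod q) * (d : ZMod q) + (b : ZMod q) * ((d⁻¹ : (ZMod q)ˣ) : ZMod q)).val : ℂ)
      / (q : ℂ))

/-- The Gauss sum τ(ψ, h) = ∑_{x mod q} ψ(x) e(xh/q). -/
noncomputable def gaussSum' {q : ℕ} [NeZero q] (ψ : DirichletCharacter ℂ q) (h : ℤ) : ℂ :=
  ∑ x : ZMod q, ψ x * eC ((x.val : ℂ) * (h : ℂ) / (q : ℂ))

/-!
Expand both Gauss sums and sum over `ψ` first: `ψ` vanishes off the units, and orthogonality of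
Dirichlet characters keeps exactly the pairs of units `x y ≡ a'b' (mod q)`, each with weight
`φ(q)`. Parametrising these pairs as `x = a'd`, `y = b'd̄` with `d` a unit turns the remaining sum
of `e((a₀x + b₀y)/q)` into `S(a, b; q)`.
-/

open Finset ZMod

lemma MulChar.sum_mul_eq_sum_units {R R' : Type*} [CommMonoid R] [Fintype R] [DecidableEq R]
    [CommRing R'] (χ : MulChar R R') (f : R → R') :
    ∑ x, χ x * f x = ∑ u : Rˣ, χ u * f u := by
  symm
  calc ∑ u : Rˣ, χ u * f u
      = ∑ x ∈ univ.map ⟨((↑) : Rˣ → R), Units.val_injective⟩, χ x * f x := by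
        rw [sum_map]; rfl
    _ = ∑ x, χ x * f x := sum_subset (subset_univ _) fun x _ hx => by
        have : ¬IsUnit x := fun ⟨u, hu⟩ => hx (by simp [← hu])
        rw [χ.map_nonunit this, zero_mul]

lemma DirichletCharacter.conj_apply_unit {q : ℕ} (ψ : DirichletCharacter ℂ q) (u : (ZMod q)ˣ) :
    starRingEnd ℂ (ψ u) = ψ ↑u⁻¹ := by
  rw [← RCLike.star_def, MulChar.star_apply', MulChar.inv_apply, Ring.inverse_unit]

section
variable {q : ℕ} [NeZero q]

lemma eC_intCast_div (n : ℤ) : eC (n / q) = stdAddChar (n : ZMod q) := by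
  rw [stdAddChar_coe, eC, mul_div_assoc]

lemma eC_val_div (z : ZMod q) : eC (z.val / q) = stdAddChar z := by
  simpa using eC_intCast_div (q := q) z.val

lemma kloosterman_eq_sum_stdAddChar (a b : ℤ) :
    kloosterman q a b =
      ∑ d : (ZMod q)ˣ,
        stdAddChar ((a : ZMod q) * (d : ZMod q) + (b : ZMod q) * ((d⁻¹ : (ZMod q)ˣ) : ZMod q)) := by
  simp only [kloosterman, eC_val_div]

lemma gaussSum'_eq_sum_stdAddChar (ψ : DirichletCharacter ℂ q) (h : ℤ) :
    gaussSum' ψ h = ∑ x, ψ x * stdAddChar (x * (h : ZMod q)) := by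
  refine sum_congr rfl fun x _ => ?_
  have := eC_intCast_div (q := q) (x.val * h)
  push_cast at this
  rw [this, natCast_zmod_val]

lemma DirichletCharacter.sum_mul_sum_mul_apply_inv (f g : ZMod q → ℂ) (u : (ZMod q)ˣ) :
    ∑ ψ : DirichletCharacter ℂ q, (∑ x, ψ x * f x) * (∑ y, ψ y * g y) * ψ ↑u⁻¹ =
      q.totient * ∑ d : (ZMod q)ˣ, f d * g ↑(d⁻¹ * u) := by
  have hψ (ψ : DirichletCharacter ℂ q) (d e : (ZMod q)ˣ) :
      ψ d * f d * (ψ e * g e) * ψ ↑u⁻¹ = ψ ↑(d * e * u⁻¹) * (f d * g e) := by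
    simp only [Units.val_mul, map_mul]
    ring
  calc _ = ∑ d : (ZMod q)ˣ, ∑ e : (ZMod q)ˣ,
        (∑ ψ : DirichletCharacter ℂ q, ψ ↑(d * e * u⁻¹)) * (f d * g e) := by
        simp_rw [MulChar.sum_mul_eq_sum_units, sum_mul_sum, sum_mul, hψ]
        rw [sum_comm]
        exact sum_congr rfl fun d _ => sum_comm
    _ = ∑ d : (ZMod q)ˣ, ∑ e : (ZMod q)ˣ,
        if e = d⁻¹ * u then (q.totient : ℂ) * (f d * g e) else 0 := by
        simp_rw [DirichletCharacter.sum_characters_eq, Units.val_eq_one, mul_inv_eq_one,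
          ← eq_inv_mul_iff_mul_eq, ite_mul, zero_mul]
    _ = _ := by simp [mul_sum]
end

theorem kloosterman_eq_sum_gauss_general (q : ℕ) [NeZero q] (a b a₀ a' b₀ b' : ℤ)
    (hA : a = a₀ * a') (hB : b = b₀ * b')
    (hcop : IsCoprime (a' * b') (q : ℤ)) :
    kloosterman q a b =
      (1 / (Nat.totient q : ℂ)) *
        ∑ ψ : DirichletCharacter ℂ q,
          gaussSum' ψ a₀ * gaussSum' ψ b₀ *
            (starRingEnd ℂ) (ψ (((a' * b' : ℤ) : ZMod q))) := by
  obtain ⟨α, hα⟩ : ∃ α : (ZMod q)ˣ, (α : ZMod q) = a' :=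
    ⟨unitOfIsCoprime a' hcop.of_mul_left_left, rfl⟩
  obtain ⟨β, hβ⟩ : ∃ β : (ZMod q)ˣ, (β : ZMod q) = b' :=
    ⟨unitOfIsCoprime b' hcop.of_mul_left_right, rfl⟩
  have hαβ : ((a' * b' : ℤ) : ZMod q) = ↑(α * β) := by rw [Int.cast_mul, Units.val_mul, hα, hβ]
  have hφ : (q.totient : ℂ) ≠ 0 := Nat.cast_ne_zero.2 (Nat.totient_pos.2 (NeZero.pos q)).ne'
  simp_rw [gaussSum'_eq_sum_stdAddChar, hαβ, DirichletCharacter.conj_apply_unit,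
    DirichletCharacter.sum_mul_sum_mul_apply_inv, one_div, inv_mul_cancel_left₀ hφ,
    kloosterman_eq_sum_stdAddChar, ← AddChar.map_add_eq_mul]
  refine Fintype.sum_equiv (Equiv.mulLeft α) _ _ fun d => congrArg stdAddChar ?_
  simp only [Equiv.coe_mulLeft, mul_inv_rev, Units.val_mul, hA, hB, Int.cast_mul, ← hα, ← hβ]
  linear_combination (-((d⁻¹ : (ZMod q)ˣ) * β * b₀ : ZMod q)) * α.inv_mul

/-- Lemma 2.3: factorisation of Kloosterman sums into Gauss sums. -/
theorem kloosterman_eq_sum_gauss (q : ℕ) [NeZero q] (a b a₀ a' b₀ b' : ℤ)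
    (hA : a = a₀ * a') (hB : b = b₀ * b')
    (hpow : ∃ k : ℕ, a₀ * b₀ ∣ (q : ℤ) ^ k)
    (hcop : IsCoprime (a' * b') (q : ℤ)) :
    kloosterman q a b =
      (1 / (Nat.totient q : ℂ)) *
        ∑ ψ : DirichletCharacter ℂ q,
          gaussSum' ψ a₀ * gaussSum' ψ b₀ *
            (starRingEnd ℂ) (ψ (((a' * b' : ℤ) : ZMod q))) :=
  kloosterman_eq_sum_gauss_general q a b a₀ a' b₀ b' hA hB hcop
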